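/- arXiv:1901.05821 — 6 statements merged into one kernel-verified Lean document; each statement's English description precedes it below -/
import Mathlib

section
/- The function V : ℝ → ℝ defined by V(μ) = sup_{x ∈ X} min_{i ∈ ι} (u_i(x) − μ·v_i(x)) is strictly decreasing: for all real μ₁ < μ₂ one has V(μ₂) < V(μ₁). (Part of the paper's Lemma 2, property 1.) -/
lemma cont_inf_aux {X : Type*} [TopologicalSpace X]
    {ι : Type*} [Fintype ι] [Nonempty ι] (f : ι → X → ℝ)
    (hf : ∀ i, Continuous (f i)) :
    Continuous fun x => ⨅ i : ι, f i x := by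
  have : (fun x => ⨅ i : ι, f i x) =
      fun x => Finset.univ.inf' Finset.univ_nonempty (fun i => f i x) := by
    funext x
    rw [Finset.inf'_univ_eq_ciInf]
  rw [this]
  exact Continuous.finset_inf'_apply _ (fun i _ => hf i)

/-- Lemma 2 (property 1, second part): the function
`V(μ) = sup_{x ∈ X} min_i (u_i(x) − μ·v_i(x))` is strictly decreasing in `μ`. -/
theorem dinkelbach_V_strictAnti
    {X : Type*} [TopologicalSpace X] [CompactSpace X] [Nonempty X]
    {ι : Type*} [Fintype ι] [Nonempty ι]
    (u v : ι → X → ℝ)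
    (hu : ∀ i, Continuous (u i)) (hv : ∀ i, Continuous (v i))
    (hvpos : ∀ i x, 0 < v i x)
    (μ₁ μ₂ : ℝ) (h : μ₁ < μ₂) :
    (⨆ x : X, ⨅ i : ι, (u i x - μ₂ * v i x)) <
      (⨆ x : X, ⨅ i : ι, (u i x - μ₁ * v i x)) := by
  set g : ℝ → X → ℝ := fun μ x => ⨅ i : ι, (u i x - μ * v i x) with hg
  have hcont : ∀ μ, Continuous (g μ) := fun μ =>
    cont_inf_aux _ (fun i => (hu i).sub (continuous_const.mul (hv i)))
  -- maximum of g μ₂ attained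
  obtain ⟨x₀, hx₀⟩ : ∃ x₀ : X, ∀ x : X, g μ₂ x ≤ g μ₂ x₀ := by
    obtain ⟨x₀, -, hx₀⟩ := isCompact_univ.exists_isMaxOn (Set.univ_nonempty)
      (hcont μ₂).continuousOn
    exact ⟨x₀, fun x => hx₀ (Set.mem_univ x)⟩
  have hbdd : BddAbove (Set.range (g μ₁)) := by
    obtain ⟨y₀, -, hy₀⟩ := isCompact_univ.exists_isMaxOn (Set.univ_nonempty)
      (hcont μ₁).continuousOn
    exact ⟨g μ₁ y₀, by rintro _ ⟨x, rfl⟩; exact hy₀ (Set.mem_univ x)⟩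
  have h1 : (⨆ x : X, g μ₂ x) = g μ₂ x₀ :=
    le_antisymm (ciSup_le hx₀) (le_ciSup ⟨g μ₂ x₀, by rintro _ ⟨x, rfl⟩; exact hx₀ x⟩ x₀)
  have h2 : g μ₂ x₀ < g μ₁ x₀ := by
    obtain ⟨i₀, hi₀⟩ := exists_eq_ciInf_of_finite (f := fun i => u i x₀ - μ₁ * v i x₀)
    calc g μ₂ x₀ ≤ u i₀ x₀ - μ₂ * v i₀ x₀ :=
          ciInf_le (Set.Finite.bddBelow (Set.finite_range _)) i₀
      _ < u i₀ x₀ - μ₁ * v i₀ x₀ := by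
          have := hvpos i₀ x₀; nlinarith
      _ = g μ₁ x₀ := hi₀
  calc (⨆ x : X, g μ₂ x) = g μ₂ x₀ := h1
    _ < g μ₁ x₀ := h2
    _ ≤ ⨆ x : X, g μ₁ x := le_ciSup hbdd x₀
end

section
/- Let μ̄ = sup_{x ∈ X} min_{i ∈ ι} u_i(x)/v_i(x). Then V(μ̄) = 0, where V(μ) = sup_{x ∈ X} min_{i ∈ ι} (u_i(x) − μ·v_i(x)). (The paper's Lemma 2, property 3.) -/
/-- Lemma 2 (property 3): `V(μ̄) = 0`, where
`V(μ) = sup_{x ∈ X} min_i (u_i(x) − μ·v_i(x))` and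
`μ̄ = sup_{x ∈ X} min_i u_i(x)/v_i(x)`. -/
theorem dinkelbach_V_at_mubar_eq_zero
    {X : Type*} [TopologicalSpace X] [CompactSpace X] [Nonempty X]
    {ι : Type*} [Fintype ι] [Nonempty ι]
    (u v : ι → X → ℝ)
    (hu : ∀ i, Continuous (u i)) (hv : ∀ i, Continuous (v i))
    (hvpos : ∀ i x, 0 < v i x) :
    (⨆ x : X, ⨅ i : ι,
        (u i x - (⨆ x' : X, ⨅ i' : ι, u i' x' / v i' x') * v i x)) = 0 := by
  set g : X → ℝ := fun x => ⨅ i, u i x / v i x with hg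
  set μ : ℝ := ⨆ x, g x with hμ
  -- continuity of g
  have hgc : Continuous g := by
    have : g = fun x => Finset.univ.inf' Finset.univ_nonempty (fun i => u i x / v i x) := by
      funext x
      rw [Finset.inf'_univ_eq_ciInf]
    rw [this]
    exact Continuous.finset_inf'_apply _ fun i _ => (hu i).div (hv i)
      (fun x => (hvpos i x).ne')
  obtain ⟨x0, -, hx0⟩ := isCompact_univ.exists_isMaxOn Set.univ_nonempty hgc.continuousOn
  have hle : ∀ x, g x ≤ g x0 := fun x => hx0 (Set.mem_univ x)
  have hμeq : μ = g x0 := le_antisymm (ciSup_le hle) (le_ciSup ⟨g x0, Set.forall_mem_range.2 hle⟩ x0)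
  set F : X → ℝ := fun x => ⨅ i, (u i x - μ * v i x) with hF
  have hFle : ∀ x, F x ≤ 0 := by
    intro x
    obtain ⟨i0, hi0⟩ := Finite.exists_min (fun i => u i x / v i x)
    have hiv : u i0 x / v i0 x ≤ μ := by
      have h1 : g x = u i0 x / v i0 x :=
        le_antisymm (ciInf_le (Finite.bddBelow_range _) i0) (le_ciInf hi0)
      rw [← h1, hμeq]; exact hle x
    have h2 : u i0 x - μ * v i0 x ≤ 0 := by
      have := (div_le_iff₀ (hvpos i0 x)).1 hiv
      linarith
    exact le_trans (ciInf_le (Finite.bddBelow_range _) i0) h2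
  have hF0 : 0 ≤ F x0 := by
    refine le_ciInf fun i => ?_
    have h1 : μ ≤ u i x0 / v i x0 := hμeq ▸ ciInf_le (Finite.bddBelow_range _) i
    have := (le_div_iff₀ (hvpos i x0)).1 h1
    linarith
  have : (⨆ x, F x) = 0 := by
    refine le_antisymm (ciSup_le hFle) ?_
    exact le_trans hF0 (le_ciSup ⟨0, Set.forall_mem_range.2 hFle⟩ x0)
  exact this
end

section
/- The function V(μ) = sup_{x ∈ X} min_{i ∈ ι} (u_i(x) − μ·v_i(x)) has a unique root: if V(μ) = 0 for some μ ∈ ℝ, then μ = μ̄, where μ̄ = sup_{x ∈ X} min_{i ∈ ι} u_i(x)/v_i(x). (The paper's Lemma 2, property 4.) -/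
/-- Lemma 2 (property 4): `V` has a unique root, namely `μ̄`: if
`V(μ) = sup_{x ∈ X} min_i (u_i(x) − μ·v_i(x)) = 0` then
`μ = μ̄ = sup_{x ∈ X} min_i u_i(x)/v_i(x)`. -/
theorem dinkelbach_V_root_unique
    {X : Type*} [TopologicalSpace X] [CompactSpace X] [Nonempty X]
    {ι : Type*} [Fintype ι] [Nonempty ι]
    (u v : ι → X → ℝ)
    (hu : ∀ i, Continuous (u i)) (hv : ∀ i, Continuous (v i))
    (hvpos : ∀ i x, 0 < v i x)
    (μ : ℝ)
    (hroot : (⨆ x : X, ⨅ i : ι, (u i x - μ * v i x)) = 0) :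
    μ = ⨆ x : X, ⨅ i : ι, u i x / v i x := by
  set f : X → ℝ := fun x => ⨅ i : ι, (u i x - μ * v i x) with hf
  set g : X → ℝ := fun x => ⨅ i : ι, u i x / v i x with hg
  have hfc : Continuous f := by
    have : f = fun x => Finset.univ.inf' Finset.univ_nonempty
        (fun i => u i x - μ * v i x) := by
      funext x; rw [Finset.inf'_univ_eq_ciInf]
    rw [this]
    exact Continuous.finset_inf'_apply _ fun i _ => (hu i).sub (continuous_const.mul (hv i))
  have hgc : Continuous g := by
    have : g = fun x => Finset.univ.inf' Finset.univ_nonempty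
        (fun i => u i x / v i x) := by
      funext x; rw [Finset.inf'_univ_eq_ciInf]
    rw [this]
    exact Continuous.finset_inf'_apply _ fun i _ => (hu i).div (hv i)
      (fun x => (hvpos i x).ne')
  have hgbdd : BddAbove (Set.range g) := by
    rw [← Set.image_univ]
    exact (isCompact_univ.image hgc).bddAbove
  -- the sup of f is attained
  obtain ⟨x0, -, hx0⟩ := isCompact_univ.exists_isMaxOn Set.univ_nonempty hfc.continuousOn
  have hx0' : ∀ x, f x ≤ f x0 := fun x => hx0 (Set.mem_univ x)
  have hsup : (⨆ x : X, f x) = f x0 :=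
    le_antisymm (ciSup_le hx0') (le_ciSup ⟨f x0, Set.forall_mem_range.2 hx0'⟩ x0)
  have hfx0 : f x0 = 0 := by rw [← hsup]; exact hroot
  apply le_antisymm
  · -- μ ≤ g x0 ≤ sup
    refine le_trans ?_ (le_ciSup hgbdd x0)
    refine le_ciInf fun i => ?_
    have h1 : (0 : ℝ) ≤ u i x0 - μ * v i x0 := by
      rw [← hfx0]
      exact ciInf_le (Finite.bddBelow_range _) i
    rw [le_div_iff₀ (hvpos i x0), mul_comm]
    linarith
  · -- sup g ≤ μ
    refine ciSup_le fun x => ?_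
    have hfx : f x ≤ 0 := by rw [← hfx0]; exact hx0' x
    obtain ⟨i, hi⟩ := Finite.exists_min (fun i => u i x - μ * v i x)
    have hfi : f x = u i x - μ * v i x :=
      le_antisymm (ciInf_le (Finite.bddBelow_range _) i) (le_ciInf hi)
    have h2 : u i x ≤ μ * v i x := by rw [hfi] at hfx; linarith
    refine le_trans (ciInf_le (Finite.bddBelow_range _) i) ?_
    rw [div_le_iff₀ (hvpos i x)]
    linarith
end

section
/- If v(p,q) > 0 and u(p,q) ≥ 0, then the surrogate PSINR satisfies ũ(p,q)/ṽ(p,q) ≤ u(p,q)/v(p,q); moreover, if v(p₀,q₀) > 0 then equality holds at the expansion point: ũ(p₀,q₀)/ṽ(p₀,q₀) = u(p₀,q₀)/v(p₀,q₀). (Properties 1 and 2 of the MM surrogate Ẽ_k = ũ/ṽ of the PSINR E_k = u/v, which guarantee convergence of Algorithm I to a stationary point.) -/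
noncomputable section

/-- Real inner product `aᵀp` of two real 2-vectors. -/
def dotR (a p : Fin 2 → ℝ) : ℝ := ∑ j, a j * p j

/-- Hermitian product `f^H q` of two complex 2-vectors. -/
def dotH (f q : Fin 2 → ℂ) : ℂ := ∑ j, (starRingEnd ℂ) (f j) * q j

/-- Hermitian product `f^H p` of a complex 2-vector with a real 2-vector. -/
def dotHR (f : Fin 2 → ℂ) (p : Fin 2 → ℝ) : ℂ := ∑ j, (starRingEnd ℂ) (f j) * (p j : ℂ)

/-- `z(p,q) = g^Hq + f̃^Hp`. -/
def zFun (g ftil : Fin 2 → ℂ) (p : Fin 2 → ℝ) (q : Fin 2 → ℂ) : ℂ :=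
  dotH g q + dotHR ftil p

/-- `u(p,q) = (σ₀ + aᵀp)² − |f^Hq + f̃^Hp|²`. -/
def uFun (σ₀ : ℝ) (a : Fin 2 → ℝ) (f ftil : Fin 2 → ℂ)
    (p : Fin 2 → ℝ) (q : Fin 2 → ℂ) : ℝ :=
  (σ₀ + dotR a p) ^ 2 - (‖dotH f q + dotHR ftil p‖) ^ 2

/-- `v(p,q) = (σ₀ + bᵀp)² − |g^Hq + f̃^Hp|²`. -/
def vFun (σ₀ : ℝ) (b : Fin 2 → ℝ) (g ftil : Fin 2 → ℂ)
    (p : Fin 2 → ℝ) (q : Fin 2 → ℂ) : ℝ :=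
  (σ₀ + dotR b p) ^ 2 - (‖zFun g ftil p q‖) ^ 2

/-- Surrogate `ũ(p,q)` around the expansion point `p₀`. -/
def uTilde (σ₀ : ℝ) (a : Fin 2 → ℝ) (f ftil : Fin 2 → ℂ) (p₀ : Fin 2 → ℝ)
    (p : Fin 2 → ℝ) (q : Fin 2 → ℂ) : ℝ :=
  -(‖dotH f q + dotHR ftil p‖) ^ 2 + (σ₀ + dotR a p₀) ^ 2
    + 2 * (σ₀ + dotR a p₀) * dotR a (p - p₀)

/-- Surrogate `ṽ(p,q)` around the expansion point `(p₀, q₀)`. -/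
def vTilde (σ₀ : ℝ) (b : Fin 2 → ℝ) (g ftil : Fin 2 → ℂ)
    (p₀ : Fin 2 → ℝ) (q₀ : Fin 2 → ℂ) (p : Fin 2 → ℝ) (q : Fin 2 → ℂ) : ℝ :=
  (σ₀ + dotR b p) ^ 2 - (‖zFun g ftil p₀ q₀‖) ^ 2
    - 2 * ((starRingEnd ℂ) (zFun g ftil p₀ q₀) *
        (zFun g ftil p q - zFun g ftil p₀ q₀)).re

/-! Both surrogates replace a convex square by its tangent at the expansion point: in `ũ` the
term `(σ₀ + aᵀp)²` is linearised, so `ũ ≤ u`; in `ṽ` the subtracted term `|z|²` is linearised,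
so `v ≤ ṽ`. Both tangents are exact at the expansion point, which gives tightness, and
from `0 ≤ u` and `0 < v ≤ ṽ` we get `ũ/ṽ ≤ u/ṽ ≤ u/v`. -/

theorem dotR_sub (a p p₀ : Fin 2 → ℝ) : dotR a (p - p₀) = dotR a p - dotR a p₀ :=
  dotProduct_sub a p p₀

theorem dotR_zero (a : Fin 2 → ℝ) : dotR a 0 = 0 :=
  dotProduct_zero a

theorem Complex.sq_norm_add_two_re_conj_mul_sub_le (z z₀ : ℂ) :
    ‖z₀‖ ^ 2 + 2 * (starRingEnd ℂ z₀ * (z - z₀)).re ≤ ‖z‖ ^ 2 := by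
  have h : ‖z‖ ^ 2 - ‖z₀‖ ^ 2 - 2 * (starRingEnd ℂ z₀ * (z - z₀)).re = ‖z - z₀‖ ^ 2 := by
    simp only [Complex.sq_norm, Complex.normSq_apply, Complex.mul_re, Complex.conj_re,
      Complex.conj_im, Complex.sub_re, Complex.sub_im]
    ring
  linarith [sq_nonneg ‖z - z₀‖]

section Surrogates

variable (σ₀ : ℝ) (a b : Fin 2 → ℝ) (f g ftil : Fin 2 → ℂ) (p₀ : Fin 2 → ℝ) (q₀ : Fin 2 → ℂ)

theorem uTilde_le_uFun (p : Fin 2 → ℝ) (q : Fin 2 → ℂ) :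
    uTilde σ₀ a f ftil p₀ p q ≤ uFun σ₀ a f ftil p q := by
  rw [uTilde, uFun, dotR_sub]
  nlinarith [sq_nonneg (dotR a p - dotR a p₀)]

theorem vFun_le_vTilde (p : Fin 2 → ℝ) (q : Fin 2 → ℂ) :
    vFun σ₀ b g ftil p q ≤ vTilde σ₀ b g ftil p₀ q₀ p q := by
  rw [vFun, vTilde]
  linarith [Complex.sq_norm_add_two_re_conj_mul_sub_le (zFun g ftil p q) (zFun g ftil p₀ q₀)]

theorem uTilde_self : uTilde σ₀ a f ftil p₀ p₀ q₀ = uFun σ₀ a f ftil p₀ q₀ := by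
  rw [uTilde, uFun, sub_self, dotR_zero]
  ring

theorem vTilde_self : vTilde σ₀ b g ftil p₀ q₀ p₀ q₀ = vFun σ₀ b g ftil p₀ q₀ := by
  rw [vTilde, vFun, sub_self, mul_zero, Complex.zero_re, mul_zero, sub_zero]

end Surrogates

/-- Properties 1 and 2 of the MM surrogate `Ẽ = ũ/ṽ` of the PSINR `E = u/v`:
it is a global lower bound tight at the expansion point. -/
theorem surrogate_psinr_lower_bound_and_tight (σ₀ : ℝ) (a b : Fin 2 → ℝ)
    (f g ftil : Fin 2 → ℂ) (p₀ : Fin 2 → ℝ) (q₀ : Fin 2 → ℂ) :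
    (∀ (p : Fin 2 → ℝ) (q : Fin 2 → ℂ),
        0 < vFun σ₀ b g ftil p q → 0 ≤ uFun σ₀ a f ftil p q →
        uTilde σ₀ a f ftil p₀ p q / vTilde σ₀ b g ftil p₀ q₀ p q ≤
          uFun σ₀ a f ftil p q / vFun σ₀ b g ftil p q) ∧
    (0 < vFun σ₀ b g ftil p₀ q₀ →
        uTilde σ₀ a f ftil p₀ p₀ q₀ / vTilde σ₀ b g ftil p₀ q₀ p₀ q₀ =
          uFun σ₀ a f ftil p₀ q₀ / vFun σ₀ b g ftil p₀ q₀) := by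
  refine ⟨fun p q hv hu => ?_, fun _ => ?_⟩
  · exact div_le_div₀ hu (uTilde_le_uFun σ₀ a f ftil p₀ p q) hv
      (vFun_le_vTilde σ₀ b g ftil p₀ q₀ p q)
  · rw [uTilde_self, vTilde_self]
end
end

section
/- Let y ∈ ℝ² with y₁ ≥ 0 and y₂ ≥ 0, and let P ∈ ℝ². Then there exists p ∈ ℝ² satisfying the componentwise constraints (A·p)ₖ ≥ yₖ and 0 ≤ pₖ ≤ Pₖ for k = 1, 2, if and only if the point p′ = A⁻¹·y satisfies 0 ≤ p′ₖ ≤ Pₖ for k = 1, 2. (This is the paper's Theorem 1: the power-feasibility problem (34) with target E′ is feasible if and only if the intersecting point p′ = A⁻¹y obeys the power budgets.) -/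
open Matrix

lemma invVec0 (A : Matrix (Fin 2) (Fin 2) ℝ) (y : Fin 2 → ℝ) :
    A⁻¹.mulVec y 0 = (A 1 1 * y 0 - A 0 1 * y 1) / A.det := by
  rw [Matrix.inv_def]
  simp [Matrix.adjugate_fin_two, Matrix.mulVec, dotProduct, Fin.sum_univ_two,
    Ring.inverse_eq_inv']
  ring

lemma invVec1 (A : Matrix (Fin 2) (Fin 2) ℝ) (y : Fin 2 → ℝ) :
    A⁻¹.mulVec y 1 = (- A 1 0 * y 0 + A 0 0 * y 1) / A.det := by
  rw [Matrix.inv_def]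
  simp [Matrix.adjugate_fin_two, Matrix.mulVec, dotProduct, Fin.sum_univ_two,
    Ring.inverse_eq_inv']
  ring

/-- Theorem 1 of the paper: the power-feasibility problem `A·p ≥ y`,
`0 ≤ p ≤ P` is feasible iff the intersecting point `p′ = A⁻¹·y` obeys the
power budgets `0 ≤ p′ ≤ P`. -/
theorem power_feasibility_iff
    (A : Matrix (Fin 2) (Fin 2) ℝ)
    (hd1 : 0 < A 0 0) (hd2 : 0 < A 1 1)
    (ho1 : A 0 1 ≤ 0) (ho2 : A 1 0 ≤ 0)
    (hdet : 0 < A.det)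
    (y : Fin 2 → ℝ) (hy1 : 0 ≤ y 0) (hy2 : 0 ≤ y 1)
    (P : Fin 2 → ℝ) :
    (∃ p : Fin 2 → ℝ, (∀ k, y k ≤ A.mulVec p k) ∧ (∀ k, 0 ≤ p k ∧ p k ≤ P k)) ↔
      (∀ k, 0 ≤ A⁻¹.mulVec y k ∧ A⁻¹.mulVec y k ≤ P k) := by
  have hdet' : A.det = A 0 0 * A 1 1 - A 0 1 * A 1 0 := Matrix.det_fin_two A
  have h0 := invVec0 A y
  have h1 := invVec1 A y
  constructor
  · rintro ⟨p, hAp, hbound⟩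
    have m0 := hAp 0
    have m1 := hAp 1
    simp [Matrix.mulVec, dotProduct, Fin.sum_univ_two] at m0 m1
    have hp0 := hbound 0
    have hp1 := hbound 1
    rw [Fin.forall_fin_two]
    constructor
    · rw [h0]
      constructor
      · apply div_nonneg _ hdet.le; nlinarith
      · have key : A 1 1 * y 0 - A 0 1 * y 1 ≤ A.det * p 0 := by
          rw [hdet']
          nlinarith [hp0.1, hp1.1]
        calc (A 1 1 * y 0 - A 0 1 * y 1) / A.det ≤ p 0 := by
              rw [div_le_iff₀ hdet]; linarith [key]
          _ ≤ P 0 := hp0.2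
    · rw [h1]
      constructor
      · apply div_nonneg _ hdet.le; nlinarith
      · have key : - A 1 0 * y 0 + A 0 0 * y 1 ≤ A.det * p 1 := by
          rw [hdet']
          nlinarith [hp0.1, hp1.1]
        calc (- A 1 0 * y 0 + A 0 0 * y 1) / A.det ≤ p 1 := by
              rw [div_le_iff₀ hdet]; linarith [key]
          _ ≤ P 1 := hp1.2
  · intro h
    refine ⟨A⁻¹.mulVec y, ?_, h⟩
    have hAy : A.mulVec (A⁻¹.mulVec y) = y := by
      rw [Matrix.mulVec_mulVec, Matrix.mul_nonsing_inv _ (isUnit_iff_ne_zero.mpr hdet.ne')]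
      simp
    intro k; rw [hAy]
end

section
/- Let A be a 2×2 real matrix with A₁₁ > 0, A₂₂ > 0, A₁₂ ≤ 0, A₂₁ ≤ 0 and det A ≤ 0, and let y ∈ ℝ² with y₁ > 0 and y₂ > 0. Then there is no p ∈ ℝ² with p₁ ≥ 0, p₂ ≥ 0 satisfying A₁₁p₁ + A₁₂p₂ ≥ y₁ and A₂₁p₁ + A₂₂p₂ ≥ y₂. (This is the infeasibility claim in the proof of the paper's Theorem 1: when det A is not positive, no nonnegative power pair satisfies the PSINR constraints.) -/
open Matrix

/-- Infeasibility claim in the proof of Theorem 1: if `det A ≤ 0` (with positive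
diagonal and nonpositive off-diagonal entries) and `y > 0` componentwise, then no
nonnegative power pair satisfies `A·p ≥ y`. -/
theorem power_infeasible_of_det_nonpos
    (A : Matrix (Fin 2) (Fin 2) ℝ)
    (hd1 : 0 < A 0 0) (hd2 : 0 < A 1 1)
    (ho1 : A 0 1 ≤ 0) (ho2 : A 1 0 ≤ 0)
    (hdet : A.det ≤ 0)
    (y : Fin 2 → ℝ) (hy1 : 0 < y 0) (hy2 : 0 < y 1) :
    ¬ ∃ p : Fin 2 → ℝ, 0 ≤ p 0 ∧ 0 ≤ p 1 ∧
        y 0 ≤ A 0 0 * p 0 + A 0 1 * p 1 ∧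
        y 1 ≤ A 1 0 * p 0 + A 1 1 * p 1 := by
  rw [Matrix.det_fin_two] at hdet
  rintro ⟨p, hp0, hp1, h1, h2⟩
  nlinarith [mul_nonneg hp0 hd2.le, mul_nonneg hp0 (neg_nonneg.2 ho2),
    mul_le_mul_of_nonneg_left h1 hd2.le,
    mul_le_mul_of_nonneg_left h2 (neg_nonneg.2 ho1),
    mul_nonpos_of_nonneg_of_nonpos hp0 hdet]
end
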